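/- If f, g ∈ F[y] satisfy f(y)² = (1 − y⁴)·g(y)², then f = g = 0. -/
import Mathlib

open Polynomial

lemma aux_oneSubX4 (F : Type*) [Field F] [CharZero F] :
    (1 - X ^ 4 : Polynomial F) = (-(X^3 + X^2 + X + 1)) * (X - C 1) := by
  ring_nf
  simp [map_one]
  ring

lemma aux_rm (F : Type*) [Field F] [CharZero F] :
    rootMultiplicity (1 : F) (1 - X ^ 4) = 1 := by
  have hq : (-(X^3 + X^2 + X + 1) : Polynomial F) ≠ 0 := by
    intro h
    have := congrArg (eval 1) h
    simp at this
    norm_num at this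
  have := rootMultiplicity_mul_X_sub_C_pow (p := (-(X^3 + X^2 + X + 1) : Polynomial F))
    (a := (1:F)) (n := 1) hq
  rw [pow_one] at this
  rw [aux_oneSubX4, this, rootMultiplicity_eq_zero]
  · intro h
    simp [IsRoot] at h
    norm_num at h

theorem stmt6 (F : Type*) [Field F] [CharZero F] (f g : Polynomial F)
    (h : f ^ 2 = (1 - X ^ 4) * g ^ 2) : f = 0 ∧ g = 0 := by
  have h4 : (1 - X ^ 4 : Polynomial F) ≠ 0 := by
    intro h0
    have := congrArg (eval 0) h0
    simp at this
  have hg : g = 0 := by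
    by_contra hg
    have hf : f ≠ 0 := by
      intro hf
      rw [hf] at h
      exact (mul_ne_zero h4 (pow_ne_zero 2 hg)) (by simpa using h.symm)
    have hm := congrArg (rootMultiplicity (1 : F)) h
    rw [sq f, sq g, rootMultiplicity_mul (by rw [← sq f]; exact pow_ne_zero 2 hf),
      rootMultiplicity_mul (by rw [← sq g, ← h, sq f]; exact mul_ne_zero hf hf),
      rootMultiplicity_mul (mul_ne_zero hg hg), aux_rm] at hm
    omega
  subst hg
  simp at h
  exact ⟨h, rfl⟩
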